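/- arXiv:1112.2367 — 5 statements merged into one kernel-verified Lean document; each statement's English description precedes it below -/
import Mathlib

section
/- Let Φ be the root system of type B₄ and P_k Kostant's partition function (number of multisets of k positive roots summing to a given weight). For every even integer m ≥ 0, ∑_{u ∈ W} (−1)^{ℓ(u)} P_m(u·((m+1)ω₄) − ω₄) = 1, where ω₄ = (ε₁+ε₂+ε₃+ε₄)/2. -/
/-!
Realise `W` as the signed permutations of the coordinates; `(-1)^ℓ(u)` is then the sign
character, read off from any word in the simple reflections. For `m = 2n` we get
`λ + ρ = (n+4, n+3, n+2, n+1)`, so the weight to decompose is `u(λ + ρ) - (4, 3, 2, 1)`.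

If `u` changes a sign, the sign vector of `u` pairs to at most `2` with every positive root but to
more than `2m` with that weight, so `P_m` vanishes. If `u = σ` is a permutation, the weight has
coordinate sum `4n = 2m`, which forces every root used to be some `ε_i + ε_j`: the multisets counted
are the multigraphs on four vertices with degrees `n + i - σ i`. Such a multigraph is determined by
the multiplicities of the edges `23, 13, 12`, which obey lower bounds and have a fixed total, so
stars and bars counts them as `C(n + 2 - D σ, 2)` for a defect `D σ ∈ {0, 1, 2, 3}`. The signed
numbers of permutations with `D σ = 0, 1, 2, 3` are `1, -2, 1, 0`, and the second difference of
`k ↦ C(k + 2, 2)` is `1`.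
-/

noncomputable section

/-- the weight space of `B₄`, with coordinates in the `ε`-basis -/
abbrev V4 := Fin 4 → ℚ

/-- `ε_i` -/
def e4 (i : Fin 4) : V4 := Pi.single i 1

/-- The sixteen positive roots of `B₄`: `ε₁, ε₂, ε₃, ε₄` and `ε_i ± ε_j` for `i < j`. -/
def posB4 : Finset V4 :=
  {e4 0, e4 1, e4 2, e4 3,
   e4 0 + e4 1, e4 0 + e4 2, e4 0 + e4 3, e4 1 + e4 2, e4 1 + e4 3, e4 2 + e4 3,
   e4 0 - e4 1, e4 0 - e4 2, e4 0 - e4 3, e4 1 - e4 2, e4 1 - e4 3, e4 2 - e4 3}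

/-- Kostant's partition function: the number of ways (as unordered multisets) to write `ν`
as a sum of exactly `k` positive roots. -/
def PB4 (k : ℕ) (ν : V4) : ℕ :=
  Set.ncard {m : Multiset V4 | Multiset.card m = k ∧ (∀ x ∈ m, x ∈ posB4) ∧ m.sum = ν}

/-- the standard inner product -/
def dot4 (x y : V4) : ℚ := ∑ i, x i * y i

/-- the reflection in the hyperplane orthogonal to `α` -/
def reflB4 (α : V4) : V4 → V4 := fun x => x - (2 * dot4 x α / dot4 α α) • α

/-- the simple roots `ε₁ - ε₂`, `ε₂ - ε₃`, `ε₃ - ε₄`, `ε₄` of `B₄` -/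
def simpleB4 : Fin 4 → V4 := fun i =>
  if i = 0 then e4 0 - e4 1 else if i = 1 then e4 1 - e4 2
  else if i = 2 then e4 2 - e4 3 else e4 3

/-- the composite of the simple reflections listed in `l` -/
def compB4 (l : List (Fin 4)) : V4 → V4 :=
  (l.map (fun i => reflB4 (simpleB4 i))).foldr (· ∘ ·) id

/-- the length of a Weyl group element: the minimal length of a word in the simple
reflections representing it -/
def lenB4 (u : V4 → V4) : ℕ := sInf {m | ∃ l : List (Fin 4), l.length = m ∧ u = compB4 l}

/-- the half-sum `ρ` of the positive roots -/
def ρ4 : V4 := (2 : ℚ)⁻¹ • ∑ α ∈ posB4, α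

/-- the fundamental weight `ω₄ = (ε₁ + ε₂ + ε₃ + ε₄)/2` -/
def ω4 : V4 := (2 : ℚ)⁻¹ • (e4 0 + e4 1 + e4 2 + e4 3)

open Finset Equiv

abbrev SignedPerm := Perm (Fin 4) × (Fin 4 → Bool)

namespace SignedPerm

def sgn (b : Bool) : ℤ := if b then -1 else 1

lemma sgn_xor (a b : Bool) : sgn (xor a b) = sgn a * sgn b := by
  cases a <;> cases b <;> rfl

def act (p : SignedPerm) (x : V4) : V4 := fun i => (sgn (p.2 i) : ℚ) * x (p.1 i)

def mul (p q : SignedPerm) : SignedPerm :=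
  (p.1.trans q.1, fun i => xor (p.2 i) (q.2 (p.1 i)))

lemma act_mul (p q : SignedPerm) : act (mul p q) = act p ∘ act q := by
  funext x i
  simp only [act, mul, Function.comp_apply, trans_apply, sgn_xor, Int.cast_mul]
  ring

lemma act_injective : Function.Injective act := by
  intro p q h
  have key (i : Fin 4) :
      (sgn (p.2 i) : ℚ) * ((p.1 i : ℕ) + 1) = sgn (q.2 i) * ((q.1 i : ℕ) + 1) :=
    congrFun (congrFun h fun j => (j : ℕ) + 1) i
  have hi (i : Fin 4) : p.1 i = q.1 i ∧ p.2 i = q.2 i := by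
    suffices ((p.1 i : ℕ) : ℚ) = (q.1 i : ℕ) ∧ p.2 i = q.2 i from
      ⟨Fin.ext (by exact_mod_cast this.1), this.2⟩
    have hi := key i
    cases hp : p.2 i <;> cases hq : q.2 i <;> simp only [hp, hq, sgn] at hi <;> push_cast at hi
    · exact ⟨by linarith, rfl⟩
    · linarith
    · linarith
    · exact ⟨by linarith, rfl⟩
  exact Prod.ext (Equiv.ext fun i => (hi i).1) (funext fun i => (hi i).2)

def gen : Fin 4 → SignedPerm
  | 0 => (Equiv.swap 0 1, fun _ => false)
  | 1 => (Equiv.swap 1 2, fun _ => false)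
  | 2 => (Equiv.swap 2 3, fun _ => false)
  | 3 => (1, fun j => decide (j = 3))

lemma reflB4_simpleB4 (i : Fin 4) : reflB4 (simpleB4 i) = act (gen i) := by
  fin_cases i <;> (funext x j; fin_cases j) <;>
    simp [reflB4, simpleB4, dot4, e4, act, gen, sgn, Fin.sum_univ_four, Pi.single_apply,
      Equiv.swap_apply_def] <;> ring

def ofWord (l : List (Fin 4)) : SignedPerm :=
  l.foldr (fun i p => mul (gen i) p) (1, fun _ => false)

lemma compB4_eq_act_ofWord (l : List (Fin 4)) : compB4 l = act (ofWord l) := by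
  induction l with
  | nil => funext x i; simp [compB4, ofWord, act, sgn]
  | cons i l ih =>
    change reflB4 (simpleB4 i) ∘ compB4 l = act (mul (gen i) (ofWord l))
    rw [ih, reflB4_simpleB4, act_mul]

lemma compB4_append (l₁ l₂ : List (Fin 4)) : compB4 (l₁ ++ l₂) = compB4 l₁ ∘ compB4 l₂ := by
  induction l₁ with
  | nil => rfl
  | cons i l ih =>
    change reflB4 (simpleB4 i) ∘ compB4 (l ++ l₂) = (reflB4 (simpleB4 i) ∘ compB4 l) ∘ compB4 l₂
    rw [ih]
    rfl

def swapWord (x y : Fin 4) : List (Fin 4) :=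
  if x = y then []
  else if (x = 0 ∧ y = 1) ∨ (x = 1 ∧ y = 0) then [0]
  else if (x = 1 ∧ y = 2) ∨ (x = 2 ∧ y = 1) then [1]
  else if (x = 2 ∧ y = 3) ∨ (x = 3 ∧ y = 2) then [2]
  else if (x = 0 ∧ y = 2) ∨ (x = 2 ∧ y = 0) then [0, 1, 0]
  else if (x = 1 ∧ y = 3) ∨ (x = 3 ∧ y = 1) then [1, 2, 1]
  else [0, 1, 2, 1, 0]

lemma ofWord_swapWord :
    ∀ x y : Fin 4, x ≠ y → ofWord (swapWord x y) = (Equiv.swap x y, fun _ => false) := by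
  decide

def flipWord (δ : Fin 4 → Bool) : List (Fin 4) :=
  (if δ 0 then [0, 1, 2, 3, 2, 1, 0] else []) ++ (if δ 1 then [1, 2, 3, 2, 1] else [])
    ++ (if δ 2 then [2, 3, 2] else []) ++ (if δ 3 then [3] else [])

lemma ofWord_flipWord : ∀ δ : Fin 4 → Bool, ofWord (flipWord δ) = (1, δ) := by
  decide

lemma exists_compB4_eq_act_perm (σ : Perm (Fin 4)) : ∃ l, compB4 l = act (σ, fun _ => false) := by
  induction σ using Perm.swap_induction_on with
  | one => exact ⟨[], compB4_eq_act_ofWord []⟩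
  | swap_mul f x y hxy ih =>
    obtain ⟨l, hl⟩ := ih
    refine ⟨l ++ swapWord x y, ?_⟩
    rw [compB4_append, hl, compB4_eq_act_ofWord, ofWord_swapWord x y hxy, ← act_mul]
    rfl

lemma exists_compB4_eq_act (p : SignedPerm) : ∃ l, compB4 l = act p := by
  obtain ⟨l, hl⟩ := exists_compB4_eq_act_perm p.1
  refine ⟨l ++ flipWord fun i => p.2 (p.1.symm i), ?_⟩
  rw [compB4_append, hl, compB4_eq_act_ofWord, ofWord_flipWord, ← act_mul]
  congr 1
  ext i <;> simp [mul]

open Classical in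
lemma eq_image_act {W : Finset (V4 → V4)} (hW : ∀ u, u ∈ W ↔ ∃ l, u = compB4 l) :
    W = univ.image act := by
  ext u
  rw [hW, mem_image]
  constructor
  · rintro ⟨l, rfl⟩
    exact ⟨ofWord l, mem_univ _, (compB4_eq_act_ofWord l).symm⟩
  · rintro ⟨p, -, rfl⟩
    obtain ⟨l, hl⟩ := exists_compB4_eq_act p
    exact ⟨l, hl.symm⟩

def eps (p : SignedPerm) : ℤ := Perm.sign p.1 * ∏ i, sgn (p.2 i)

lemma eps_mul (p q : SignedPerm) : eps (mul p q) = eps p * eps q := by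
  have hsign : (Perm.sign (p.1.trans q.1) : ℤ) = Perm.sign p.1 * Perm.sign q.1 := by
    rw [Perm.sign_trans, Units.val_mul, mul_comm]
  have hprod : ∏ i, sgn (xor (p.2 i) (q.2 (p.1 i))) = (∏ i, sgn (p.2 i)) * ∏ i, sgn (q.2 i) := by
    simp only [sgn_xor, prod_mul_distrib, Equiv.prod_comp p.1 fun i => sgn (q.2 i)]
  simp only [eps, mul, hsign, hprod]
  ring

lemma eps_gen (i : Fin 4) : eps (gen i) = -1 := by
  fin_cases i <;> simp [eps, gen, sgn]

lemma eps_ofWord (l : List (Fin 4)) : eps (ofWord l) = (-1) ^ l.length := by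
  induction l with
  | nil => simp [ofWord, eps, sgn]
  | cons i l ih =>
    change eps (mul (gen i) (ofWord l)) = _
    rw [eps_mul, eps_gen, ih, List.length_cons, pow_succ]
    ring

lemma neg_one_pow_lenB4_act (p : SignedPerm) : (-1 : ℤ) ^ lenB4 (act p) = eps p := by
  obtain ⟨l, hl⟩ := exists_compB4_eq_act p
  have hne : {k | ∃ l : List (Fin 4), l.length = k ∧ act p = compB4 l}.Nonempty :=
    ⟨_, l, rfl, hl.symm⟩
  obtain ⟨l', hlen, hl'⟩ := Nat.sInf_mem hne
  rw [lenB4, ← hlen, ← eps_ofWord, act_injective (hl'.trans (compB4_eq_act_ofWord l'))]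

lemma eps_perm (σ : Perm (Fin 4)) : eps (σ, fun _ => false) = Perm.sign σ := by
  simp [eps, sgn]

end SignedPerm

def rootList : List V4 :=
  [e4 0, e4 1, e4 2, e4 3,
   e4 0 + e4 1, e4 0 + e4 2, e4 0 + e4 3, e4 1 + e4 2, e4 1 + e4 3, e4 2 + e4 3,
   e4 0 - e4 1, e4 0 - e4 2, e4 0 - e4 3, e4 1 - e4 2, e4 1 - e4 3, e4 2 - e4 3]

lemma rootList_nodup : rootList.Nodup := by
  refine List.Nodup.of_map (fun v : V4 => v 0 + 8 * v 1 + 64 * v 2 + 512 * v 3) ?_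
  simp [rootList, e4]
  norm_num

lemma sum_posB4 : ∑ α ∈ posB4, α = fun i : Fin 4 => 7 - 2 * ((i : ℕ) : ℚ) := by
  rw [show posB4 = rootList.toFinset by simp [posB4, rootList],
    List.sum_toFinset _ rootList_nodup]
  funext i
  fin_cases i <;> simp [rootList, e4] <;> norm_num

def weightPlusRho (n : ℕ) : V4 := fun i => (n : ℚ) + 4 - (i : ℕ)

lemma smul_omega4_add_rho4 (n : ℕ) : (((n + n : ℕ) : ℚ) + 1) • ω4 + ρ4 = weightPlusRho n := by
  funext i
  fin_cases i <;> simp [weightPlusRho, ρ4, ω4, sum_posB4, e4] <;> ring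

lemma rho4_add_omega4 : ρ4 + ω4 = weightPlusRho 0 := by
  simpa [add_comm] using smul_omega4_add_rho4 0

section LinearBound

variable {M N F : Type*} [AddCommMonoid M] [AddCommGroup N] [LinearOrder N]
  [IsOrderedAddMonoid N] [FunLike F M N] [AddMonoidHomClass F M N]

lemma Multiset.map_sum_le_card_nsmul (f : F) {c : N} {s : Multiset M}
    (h : ∀ x ∈ s, f x ≤ c) : f s.sum ≤ Multiset.card s • c := by
  rw [map_multiset_sum, ← Multiset.card_map f s]
  exact Multiset.sum_le_card_nsmul _ _ (by simpa using h)

lemma Multiset.eq_of_map_sum_eq_card_nsmul (f : F) {c : N} {s : Multiset M}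
    (h : ∀ x ∈ s, f x ≤ c) (hs : f s.sum = Multiset.card s • c) : ∀ x ∈ s, f x = c := by
  have hzero := Multiset.all_zero_of_le_zero_le_of_sum_eq_zero (s := s.map fun x => c - f x)
    (by simpa using h) (by simp [Multiset.sum_map_sub, ← map_multiset_sum, hs])
  intro x hx
  exact (sub_eq_zero.1 (hzero _ (Multiset.mem_map_of_mem _ hx))).symm

end LinearBound

lemma PB4_eq_zero_of_lt (w : V4) {c : ℚ} (hw : ∀ α ∈ posB4, w ⬝ᵥ α ≤ c) {k : ℕ} {ν : V4}
    (hν : k • c < w ⬝ᵥ ν) : PB4 k ν = 0 := by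
  rw [PB4, ← Set.ncard_empty (Multiset V4)]
  congr
  refine Set.eq_empty_of_forall_notMem ?_
  rintro m ⟨rfl, hm, rfl⟩
  have := Multiset.map_sum_le_card_nsmul (dotProductBilin ℚ ℚ w) (c := c) (s := m)
    (by simpa using fun x hx => hw x (hm x hx))
  simp only [dotProductBilin_apply_apply] at this
  exact hν.not_ge this

lemma dotProduct_le_two_of_mem_posB4 {w : V4} (hw : ∀ i, |w i| ≤ 1) {α : V4}
    (hα : α ∈ posB4) : w ⬝ᵥ α ≤ 2 := by
  have := fun i => abs_le.1 (hw i)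
  simp only [posB4, mem_insert, mem_singleton] at hα
  rcases hα with rfl|rfl|rfl|rfl|rfl|rfl|rfl|rfl|rfl|rfl|rfl|rfl|rfl|rfl|rfl|rfl <;>
    simp [dotProduct, Fin.sum_univ_four, e4, Pi.single_apply] <;>
    linarith [this 0, this 1, this 2, this 3]

-- The roots `ε_i + ε_j`, indexed like the edges `01, 02, 03, 12, 13, 23` of `K₄`.
def pairRoot : Fin 6 → V4 :=
  ![e4 0 + e4 1, e4 0 + e4 2, e4 0 + e4 3, e4 1 + e4 2, e4 1 + e4 3, e4 2 + e4 3]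

lemma pairRoot_mem_posB4 (j : Fin 6) : pairRoot j ∈ posB4 := by
  fin_cases j <;> simp [pairRoot, posB4]

lemma pairRoot_injective : Function.Injective pairRoot := by
  intro j k h
  have h0 := congrFun h 0; have h1 := congrFun h 1; have h2 := congrFun h 2
  fin_cases j <;> fin_cases k <;> simp [pairRoot, e4] at h0 h1 h2 ⊢

lemma one_dotProduct_pairRoot (j : Fin 6) : 1 ⬝ᵥ pairRoot j = 2 := by
  fin_cases j <;> simp [pairRoot, dotProduct, Fin.sum_univ_four, e4, Pi.single_apply] <;> norm_num

lemma mem_range_pairRoot {α : V4} (hα : α ∈ posB4) (h : 1 ⬝ᵥ α = 2) :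
    α ∈ Set.range pairRoot := by
  simp only [posB4, mem_insert, mem_singleton] at hα
  rcases hα with rfl|rfl|rfl|rfl|rfl|rfl|rfl|rfl|rfl|rfl|rfl|rfl|rfl|rfl|rfl|rfl <;>
    simp [dotProduct, Fin.sum_univ_four, e4, Pi.single_apply] at h <;> norm_num at h
  all_goals simp [pairRoot]

section CountVector

variable {ι α : Type*} [Fintype ι] [DecidableEq α] {r : ι → α}

lemma Multiset.count_sum_nsmul_singleton (hr : Function.Injective r) (c : ι → ℕ) (i : ι) :
    (∑ j, c j • ({r j} : Multiset α)).count (r i) = c i := by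
  simp only [Multiset.count_sum', Multiset.count_nsmul, Multiset.count_singleton, mul_ite,
    mul_one, mul_zero]
  rw [sum_eq_single i (fun j _ hj => if_neg (hr.ne hj).symm) (by simp), if_pos rfl]

lemma Multiset.sum_count_nsmul_singleton (hr : Function.Injective r) {m : Multiset α}
    (hm : ∀ x ∈ m, x ∈ Set.range r) : ∑ j, m.count (r j) • ({r j} : Multiset α) = m := by
  ext x
  by_cases hx : x ∈ Set.range r
  · obtain ⟨i, rfl⟩ := hx
    exact Multiset.count_sum_nsmul_singleton hr _ i
  · rw [Multiset.count_eq_zero_of_notMem fun h => hx (hm x h)]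
    simp only [Set.mem_range, not_exists] at hx
    simp [fun j => Ne.symm (hx j)]

end CountVector

lemma PB4_eq_ncard_pairCounts {k : ℕ} {ν : V4} (hν : 1 ⬝ᵥ ν = k • 2) :
    PB4 k ν = {c : Fin 6 → ℕ | ∑ j, c j • pairRoot j = ν}.ncard := by
  set ofCounts : (Fin 6 → ℕ) → Multiset V4 := fun c => ∑ j, c j • {pairRoot j}
  have sum_ofCounts (c) : (ofCounts c).sum = ∑ j, c j • pairRoot j := by
    simp only [ofCounts, Multiset.sum_sum, Multiset.sum_nsmul, Multiset.sum_singleton]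
  have card_ofCounts (c) : Multiset.card (ofCounts c) = ∑ j, c j := by
    simp [ofCounts]
  have inj : Function.Injective ofCounts := fun c c' h => funext fun i => by
    simpa [ofCounts, Multiset.count_sum_nsmul_singleton pairRoot_injective] using
      congrArg (Multiset.count (pairRoot i)) h
  rw [PB4, ← Set.ncard_image_of_injective _ inj]
  congr 1
  ext m
  simp only [Set.mem_ofPred_eq, Set.mem_image]
  constructor
  · rintro ⟨rfl, hm, rfl⟩
    have h2 := Multiset.eq_of_map_sum_eq_card_nsmul (dotProductBilin ℚ ℚ 1) (c := 2) (s := m)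
      (by simpa using fun x hx => dotProduct_le_two_of_mem_posB4 (by simp) (hm x hx))
      (by simpa using hν)
    have hrange : ∀ x ∈ m, x ∈ Set.range pairRoot := fun x hx =>
      mem_range_pairRoot (hm x hx) (by simpa using h2 x hx)
    have hm' := Multiset.sum_count_nsmul_singleton pairRoot_injective hrange
    refine ⟨fun j => m.count (pairRoot j), ?_, hm'⟩
    rw [← sum_ofCounts]
    exact congrArg Multiset.sum hm'
  · rintro ⟨c, hc, rfl⟩
    refine ⟨?_, ?_, by rw [sum_ofCounts, hc]⟩
    · have : 1 ⬝ᵥ ν = (∑ j, c j) • 2 := by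
        simp only [← hc, dotProduct_sum, dotProduct_smul, one_dotProduct_pairRoot, sum_smul]
      have h : ((∑ j, c j : ℕ) : ℚ) * 2 = (k : ℚ) * 2 := by
        simpa [nsmul_eq_mul] using this.symm.trans hν
      rw [card_ofCounts]
      exact_mod_cast mul_right_cancel₀ two_ne_zero h
    · intro x hx
      simp only [ofCounts, Multiset.mem_sum, Multiset.mem_nsmul, Multiset.mem_singleton] at hx
      obtain ⟨j, -, -, rfl⟩ := hx
      exact pairRoot_mem_posB4 j

lemma card_piAntidiag_univ {ι : Type*} [Fintype ι] [DecidableEq ι] (t : ℕ) :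
    #(piAntidiag (univ : Finset ι) t) = (Fintype.card ι).multichoose t := by
  rw [← map_sym_eq_piAntidiag, card_map, sym_univ, card_univ, Sym.card_sym_eq_multichoose]

lemma ncard_le_and_sum_eq {ι : Type*} [Fintype ι] [DecidableEq ι] (a : ι → ℕ) (s : ℕ) :
    {y : ι → ℕ | a ≤ y ∧ ∑ i, y i = s}.ncard =
      if ∑ i, a i ≤ s then (Fintype.card ι).multichoose (s - ∑ i, a i) else 0 := by
  split_ifs with h
  · have himage : {y : ι → ℕ | a ≤ y ∧ ∑ i, y i = s} =
        (· + a) '' ↑(piAntidiag (univ : Finset ι) (s - ∑ i, a i)) := by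
      ext y
      simp only [Set.mem_ofPred_eq, Set.mem_image, mem_coe, mem_piAntidiag, mem_univ,
        implies_true, and_true]
      constructor
      · rintro ⟨hay, rfl⟩
        exact ⟨y - a, sum_tsub_distrib _ fun i _ => hay i, tsub_add_cancel_of_le hay⟩
      · rintro ⟨z, hz, rfl⟩
        refine ⟨le_add_self, ?_⟩
        simp only [Pi.add_apply, sum_add_distrib, hz]
        omega
    rw [himage, Set.ncard_image_of_injective _ (add_left_injective a), Set.ncard_coe_finset,
      card_piAntidiag_univ]
  · rw [← Set.ncard_empty (ι → ℕ)]
    congr 1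
    refine Set.eq_empty_of_forall_notMem ?_
    rintro y ⟨hay, rfl⟩
    exact h (sum_le_sum fun i _ => hay i)

lemma perm_val_sum : ∀ σ : Perm (Fin 4), (σ 0 : ℕ) + σ 1 + σ 2 + σ 3 = 6 := by
  decide

def pairDegree (c : Fin 6 → ℕ) : Fin 4 → ℕ :=
  ![c 0 + c 1 + c 2, c 0 + c 3 + c 4, c 1 + c 3 + c 5, c 2 + c 4 + c 5]

lemma sum_nsmul_pairRoot (c : Fin 6 → ℕ) :
    ∑ j, c j • pairRoot j = fun i => (pairDegree c i : ℚ) := by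
  funext i
  fin_cases i <;> simp [pairRoot, pairDegree, Fin.sum_univ_six, e4]

/- If the degrees are `n + i - σ i`, then `c₀₁ + σ 0 + σ 1 = c₂₃ + 1`, and likewise for the other
perfect matchings `{02, 13}`, `{03, 12}` of `K₄`; so `(c₂₃, c₁₃, c₁₂)` determines the multigraph,
subject to these lower bounds and to `c₂₃ + c₁₃ + c₁₂ = n + σ 0`. -/
def matchingLowerBound (σ : Perm (Fin 4)) : Fin 3 → ℕ :=
  ![σ 0 + σ 1 - 1, σ 0 + σ 2 - 2, σ 0 + σ 3 - 3]

lemma ncard_pairDegree_eq (n : ℕ) (σ : Perm (Fin 4)) :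
    {c : Fin 6 → ℕ | ∀ i, pairDegree c i + σ i = n + i}.ncard =
      {y : Fin 3 → ℕ | matchingLowerBound σ ≤ y ∧ ∑ i, y i = n + σ 0}.ncard := by
  have hσ := perm_val_sum σ
  have degree_eqs {c : Fin 6 → ℕ} (hc : ∀ i, pairDegree c i + σ i = n + i) :
      c 0 + c 1 + c 2 + σ 0 = n ∧ c 0 + c 3 + c 4 + σ 1 = n + 1 ∧
        c 1 + c 3 + c 5 + σ 2 = n + 2 ∧ c 2 + c 4 + c 5 + σ 3 = n + 3 :=
    ⟨hc 0, hc 1, hc 2, hc 3⟩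
  refine Set.ncard_congr (fun c _ => ![c 5, c 4, c 3]) ?_ ?_ ?_
  · intro c hc
    obtain ⟨h0, h1, h2, h3⟩ := degree_eqs hc
    refine ⟨fun i => ?_, ?_⟩
    · fin_cases i <;>
        simp only [Fin.isValue, Fin.zero_eta, Fin.mk_one, Fin.reduceFinMk, matchingLowerBound,
          Matrix.cons_val_zero, Matrix.cons_val_one, Matrix.cons_val, tsub_le_iff_right] <;>
        omega
    · simp only [Fin.sum_univ_three, Matrix.cons_val_zero, Matrix.cons_val_one, Matrix.cons_val]
      omega
  · intro c c' hc hc' h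
    obtain ⟨h0, h1, h2, h3⟩ := degree_eqs hc
    obtain ⟨h0', h1', h2', h3'⟩ := degree_eqs hc'
    obtain ⟨hc5, hc4, hc3⟩ : c 5 = c' 5 ∧ c 4 = c' 4 ∧ c 3 = c' 3 :=
      ⟨congrFun h 0, congrFun h 1, congrFun h 2⟩
    funext j
    fin_cases j <;> simp only [Fin.isValue, Fin.zero_eta, Fin.mk_one, Fin.reduceFinMk] <;> omega
  · rintro y ⟨hy, hs⟩
    have hy0 := hy 0; have hy1 := hy 1; have hy2 := hy 2
    simp only [matchingLowerBound, Matrix.cons_val_zero, Matrix.cons_val_one, Matrix.cons_val,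
      tsub_le_iff_right] at hy0 hy1 hy2
    simp only [Fin.sum_univ_three] at hs
    refine ⟨![y 0 + 1 - (σ 0 + σ 1), y 1 + 2 - (σ 0 + σ 2), y 2 + 3 - (σ 0 + σ 3), y 2, y 1, y 0],
      fun i => ?_, ?_⟩
    · fin_cases i <;>
        simp only [Fin.isValue, Fin.zero_eta, Fin.mk_one, Fin.reduceFinMk, pairDegree,
          Matrix.cons_val_zero, Matrix.cons_val_one, Matrix.cons_val] <;>
        omega
    · funext i
      fin_cases i <;> rfl

def matchingDefect (σ : Perm (Fin 4)) : ℕ := ∑ i, matchingLowerBound σ i - σ 0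

lemma le_sum_matchingLowerBound :
    ∀ σ : Perm (Fin 4), (σ 0 : ℕ) ≤ ∑ i, matchingLowerBound σ i := by
  decide

lemma PB4_perm (n : ℕ) (σ : Perm (Fin 4)) :
    PB4 (n + n) (fun i : Fin 4 => (n : ℚ) + (i : ℕ) - (σ i : ℕ)) =
      (n + 2 - matchingDefect σ).choose 2 := by
  have hσ : ((σ 0 : ℕ) : ℚ) + (σ 1 : ℕ) + (σ 2 : ℕ) + (σ 3 : ℕ) = 6 := by
    exact_mod_cast perm_val_sum σ
  have hdeg :
      {c : Fin 6 → ℕ | ∑ j, c j • pairRoot j = fun i : Fin 4 => (n : ℚ) + (i : ℕ) - (σ i : ℕ)} =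
        {c | ∀ i, pairDegree c i + σ i = n + i} := by
    ext c
    simp only [Set.mem_ofPred_eq, sum_nsmul_pairRoot, funext_iff, eq_sub_iff_add_eq]
    norm_cast
  have hle := le_sum_matchingLowerBound σ
  rw [PB4_eq_ncard_pairCounts, hdeg, ncard_pairDegree_eq, ncard_le_and_sum_eq, Fintype.card_fin,
    matchingDefect]
  · split_ifs with h
    · rw [Nat.multichoose_eq, show 3 + (n + σ 0 - ∑ i, matchingLowerBound σ i) - 1 =
        (n + σ 0 - ∑ i, matchingLowerBound σ i) + 2 by omega, Nat.choose_symm_add]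
      congr 1
      omega
    · exact (Nat.choose_eq_zero_of_lt (by omega)).symm
  · simp [dotProduct, Fin.sum_univ_four]
    linarith

namespace SignedPerm

lemma act_perm_sub (n : ℕ) (σ : Perm (Fin 4)) :
    act (σ, fun _ => false) (weightPlusRho n) - weightPlusRho 0 =
      fun i : Fin 4 => (n : ℚ) + (i : ℕ) - (σ i : ℕ) := by
  funext i
  simp only [act, sgn, weightPlusRho, Pi.sub_apply]
  push_cast
  ring

lemma sum_sgn_mul_le : ∀ δ : Fin 4 → Bool, δ ≠ (fun _ => false) →
    ∑ i : Fin 4, sgn (δ i) * (4 - ((i : ℕ) : ℤ)) ≤ 8 := by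
  decide

lemma PB4_act_eq_zero (n : ℕ) (p : SignedPerm) (hp : p.2 ≠ fun _ => false) :
    PB4 (n + n) (act p (weightPlusRho n) - weightPlusRho 0) = 0 := by
  have hsq (b : Bool) : (sgn b : ℚ) * sgn b = 1 := by cases b <;> simp [sgn]
  have hσ : ((p.1 0 : ℕ) : ℚ) + (p.1 1 : ℕ) + (p.1 2 : ℕ) + (p.1 3 : ℕ) = 6 := by
    exact_mod_cast perm_val_sum p.1
  have hS : ∑ i : Fin 4, (sgn (p.2 i) : ℚ) * (4 - (i : ℕ)) ≤ 8 := by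
    exact_mod_cast sum_sgn_mul_le p.2 hp
  refine PB4_eq_zero_of_lt (fun i => (sgn (p.2 i) : ℚ))
    (fun α hα => dotProduct_le_two_of_mem_posB4 (fun i => by cases p.2 i <;> simp [sgn]) hα) ?_
  calc ((n + n) • 2 : ℚ)
      < ∑ i : Fin 4, ((n : ℚ) + 4 - (p.1 i : ℕ)) - ∑ i, (sgn (p.2 i) : ℚ) * (4 - (i : ℕ)) := by
        simp only [Fin.sum_univ_four, nsmul_eq_mul] at hS ⊢
        push_cast
        linarith
    _ = _ := by
        rw [← sum_sub_distrib]
        refine sum_congr rfl fun i _ => ?_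
        simp only [Pi.sub_apply, act, weightPlusRho]
        linear_combination (-((n : ℚ) + 4 - (p.1 i : ℕ))) * hsq (p.2 i)

end SignedPerm

lemma sum_sign_mul_matchingDefect (f : ℕ → ℤ) :
    ∑ σ : Perm (Fin 4), Perm.sign σ * f (matchingDefect σ) = f 0 - 2 * f 1 + f 2 := by
  have hlt : ∀ σ : Perm (Fin 4), matchingDefect σ < 4 := by decide
  have fiber (d : ℕ) : ∑ σ with matchingDefect σ = d, (Perm.sign σ : ℤ) * f (matchingDefect σ) =
      (∑ σ with matchingDefect σ = d, (Perm.sign σ : ℤ)) * f d := by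
    rw [sum_mul]
    exact sum_congr rfl fun σ hσ => by rw [(mem_filter.1 hσ).2]
  have c0 : ∑ σ : Perm (Fin 4) with matchingDefect σ = 0, (Perm.sign σ : ℤ) = 1 := by decide
  have c1 : ∑ σ : Perm (Fin 4) with matchingDefect σ = 1, (Perm.sign σ : ℤ) = -2 := by decide
  have c2 : ∑ σ : Perm (Fin 4) with matchingDefect σ = 2, (Perm.sign σ : ℤ) = 1 := by decide
  have c3 : ∑ σ : Perm (Fin 4) with matchingDefect σ = 3, (Perm.sign σ : ℤ) = 0 := by decide
  rw [← sum_fiberwise_of_maps_to (g := matchingDefect) (t := range 4)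
    fun σ _ => mem_range.2 (hlt σ)]
  simp only [sum_range_succ, range_zero, sum_empty, fiber, c0, c1, c2, c3]
  ring

lemma choose_two_second_difference (n : ℕ) :
    ((n + 2).choose 2 : ℤ) - 2 * (n + 1).choose 2 + n.choose 2 = 1 := by
  rw [Nat.choose_succ_succ (n + 1) 1, Nat.choose_succ_succ n 1, Nat.choose_one_right,
    Nat.choose_one_right]
  push_cast
  ring

open SignedPerm

theorem statement13 (W : Finset (V4 → V4))
    (hW : ∀ u, u ∈ W ↔ ∃ l : List (Fin 4), u = compB4 l)
    (m : ℕ) (hm : Even m) :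
    ∑ u ∈ W, (-1 : ℤ) ^ lenB4 u *
      (PB4 m (u (((m : ℚ) + 1) • ω4 + ρ4) - ρ4 - ω4) : ℤ) = 1 := by
  classical
  obtain ⟨n, rfl⟩ := hm
  rw [eq_image_act hW, sum_image fun p _ q _ h => act_injective h, Fintype.sum_prod_type]
  simp only [sub_sub, rho4_add_omega4, smul_omega4_add_rho4, neg_one_pow_lenB4_act]
  calc _ = ∑ σ : Perm (Fin 4), Perm.sign σ * ((n + 2 - matchingDefect σ).choose 2 : ℤ) := by
        refine sum_congr rfl fun σ _ => ?_
        rw [sum_eq_single (fun _ => false) (fun δ _ hδ => by rw [PB4_act_eq_zero n _ hδ]; simp)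
          (by simp), eps_perm, act_perm_sub, PB4_perm]
    _ = 1 := by
        rw [sum_sign_mul_matchingDefect fun d => ((n + 2 - d).choose 2 : ℤ)]
        simpa using choose_two_second_difference n
end
end

section
/- Let Φ be of type G₂ with simple roots α₁ (short) and α₂ (long), and let P_k(ν) count expressions of ν as a sum of exactly k positive roots. Let λ = aω₁ + bω₂ with a ≥ 3 and 0 ≤ b ≤ 2. Then for all k ≤ a + b − 2, P_k(λ − ω₁) = P_k(s₂·λ − ω₁), where s₂ is the simple reflection in α₂ and · the dot action. -/
noncomputable section

/-- the weight space of `G₂`, in coordinates with respect to the simple roots `α₁, α₂`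
(`α₁` short) -/
abbrev VG := Fin 2 → ℚ

/-- The six positive roots of `G₂`: `α₁, α₂, α₁+α₂, 2α₁+α₂, 3α₁+α₂, 3α₁+2α₂`. -/
def posG : Finset VG := {![1, 0], ![0, 1], ![1, 1], ![2, 1], ![3, 1], ![3, 2]}

/-- Kostant's partition function: the number of ways (as unordered multisets) to write `ν`
as a sum of exactly `k` positive roots. -/
def PG (k : ℕ) (ν : VG) : ℕ :=
  Set.ncard {m : Multiset VG | Multiset.card m = k ∧ (∀ x ∈ m, x ∈ posG) ∧ m.sum = ν}

/-- the Cartan matrix of `G₂` (`α₁` short); the `(i,j)` entry is `⟨α_j, α_i^∨⟩` -/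
def CG : Matrix (Fin 2) (Fin 2) ℚ := !![2, -3; -1, 2]

/-- the simple reflection `s_i` acting on the weight space:
`s_i(x) = x - ⟨x, α_i^∨⟩ α_i` -/
def sG (i : Fin 2) : VG → VG := fun x => x - (∑ j, x j * CG i j) • (Pi.single i 1 : VG)

/-- the fundamental weight `ω₁ = 2α₁ + α₂` -/
def ω₁G : VG := ![2, 1]

/-- the fundamental weight `ω₂ = 3α₁ + 2α₂` -/
def ω₂G : VG := ![3, 2]

/-- the half-sum `ρ` of the positive roots -/
def ρG : VG := (2 : ℚ)⁻¹ • ∑ α ∈ posG, α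

/-! Among the positive roots of `G₂`, only the highest root `β = 3α₁+2α₂` has `α₂`-coordinate `2`,
and only `γ = 3α₁+α₂` has `α₁`-coordinate exceeding its `α₂`-coordinate by `2`; for all others
both quantities are at most `1`. Hence a sum of `k` positive roots equal to `ν = λ - ω₁` uses `β`
at least `ν₂ - k ≥ b + 1` times, and one equal to `s₂·λ - ω₁ = ν - (b+1)α₂` uses `γ` at least
`b + 1` times. As `β - γ = α₂`, trading `b + 1` copies of `β` for copies of `γ` is a bijection
between the two sets of decompositions. -/

section Exchange

variable {V : Type*} [AddCancelCommMonoid V] [DecidableEq V]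

def decompositions (s : Set V) (k : ℕ) (ν : V) : Set (Multiset V) :=
  {m | Multiset.card m = k ∧ (∀ x ∈ m, x ∈ s) ∧ m.sum = ν}

lemma sub_replicate_add_replicate_mem_decompositions {s : Set V} {k c : ℕ} {ν ν' β γ : V}
    {m : Multiset V} (hm : m ∈ decompositions s k ν) (hβ : Multiset.replicate c β ≤ m)
    (hγ : γ ∈ s) (hνν' : ν + c • γ = ν' + c • β) :
    m - Multiset.replicate c β + Multiset.replicate c γ ∈ decompositions s k ν' := by
  obtain ⟨hcard, hs, hsum⟩ := hm
  have hck : c ≤ k := by simpa [hcard] using Multiset.card_le_card hβ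
  refine ⟨?_, ?_, ?_⟩
  · rw [Multiset.card_add, Multiset.card_sub hβ]
    simp only [Multiset.card_replicate, hcard]
    omega
  · intro x hx
    rcases Multiset.mem_add.mp hx with hx | hx
    · exact hs x (Multiset.mem_of_le tsub_le_self hx)
    · rwa [Multiset.eq_of_mem_replicate hx]
  · have hsplit : (m - Multiset.replicate c β).sum + c • β = ν := by
      rw [← Multiset.sum_replicate, ← Multiset.sum_add, tsub_add_cancel_of_le hβ, hsum]
    apply add_right_cancel (b := c • β)
    rw [Multiset.sum_add, Multiset.sum_replicate, ← hνν', ← hsplit]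
    abel

theorem ncard_decompositions_eq_of_exchange {s : Set V} {k c : ℕ} {ν ν' β γ : V}
    (hβs : β ∈ s) (hγs : γ ∈ s) (hνν' : ν + c • γ = ν' + c • β)
    (hβ : ∀ m ∈ decompositions s k ν, c ≤ Multiset.count β m)
    (hγ : ∀ m ∈ decompositions s k ν', c ≤ Multiset.count γ m) :
    (decompositions s k ν).ncard = (decompositions s k ν').ncard := by
  have hβle m (hm : m ∈ decompositions s k ν) : Multiset.replicate c β ≤ m :=
    Multiset.le_count_iff_replicate_le.mp (hβ m hm)
  have hγle m (hm : m ∈ decompositions s k ν') : Multiset.replicate c γ ≤ m :=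
    Multiset.le_count_iff_replicate_le.mp (hγ m hm)
  refine Set.ncard_congr (fun m _ => m - Multiset.replicate c β + Multiset.replicate c γ)
    (fun m hm => sub_replicate_add_replicate_mem_decompositions hm (hβle m hm) hγs hνν')
    (fun m₁ m₂ hm₁ hm₂ h => ?_) (fun m hm => ?_)
  · rw [← tsub_add_cancel_of_le (hβle m₁ hm₁), ← tsub_add_cancel_of_le (hβle m₂ hm₂),
      add_right_cancel h]
  · refine ⟨m - Multiset.replicate c γ + Multiset.replicate c β,
      sub_replicate_add_replicate_mem_decompositions hm (hγle m hm) hβs hνν'.symm, ?_⟩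
    rw [add_tsub_cancel_right, tsub_add_cancel_of_le (hγle m hm)]

end Exchange

lemma PG_eq_ncard_decompositions (k : ℕ) (ν : VG) :
    PG k ν = (decompositions (posG : Set VG) k ν).ncard :=
  rfl

lemma map_sum_le_card_add_count {V : Type*} [AddCommMonoid V] [DecidableEq V] (f : V →+ ℚ)
    (γ : V) (m : Multiset V) (hf : ∀ x ∈ m, f x ≤ 1 + if γ = x then 1 else 0) :
    f m.sum ≤ Multiset.card m + Multiset.count γ m := by
  induction m using Multiset.induction_on with
  | empty => simp
  | cons x m ih =>
    have hx := hf x (Multiset.mem_cons_self x m)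
    have hm := ih fun y hy => hf y (Multiset.mem_cons_of_mem hy)
    rw [Multiset.sum_cons, map_add, Multiset.card_cons, Multiset.count_cons]
    split_ifs at hx ⊢ <;> push_cast <;> linarith

lemma posG_sum_one_le_card_add_count (m : Multiset VG) (hm : ∀ x ∈ m, x ∈ posG) :
    m.sum 1 ≤ Multiset.card m + Multiset.count ![3, 2] m := by
  refine map_sum_le_card_add_count (Pi.evalAddMonoidHom (fun _ : Fin 2 => ℚ) 1) _ m
    fun x hx => ?_
  have hx := hm x hx
  fin_cases hx <;> norm_num [funext_iff, Fin.forall_fin_two]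

lemma posG_sum_zero_sub_sum_one_le_card_add_count (m : Multiset VG) (hm : ∀ x ∈ m, x ∈ posG) :
    m.sum 0 - m.sum 1 ≤ Multiset.card m + Multiset.count ![3, 1] m := by
  refine map_sum_le_card_add_count
    (Pi.evalAddMonoidHom (fun _ : Fin 2 => ℚ) 0 - Pi.evalAddMonoidHom _ 1) _ m fun x hx => ?_
  have hx := hm x hx
  fin_cases hx <;> norm_num [funext_iff, Fin.forall_fin_two]

lemma ρG_eq : ρG = ![5, 3] := by
  funext i
  fin_cases i <;> norm_num [ρG, posG, Finset.sum_insert, funext_iff, Fin.forall_fin_two]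

theorem statement14_general (a b : ℕ) (k : ℕ)
    (hk : (k : ℤ) ≤ (a : ℤ) + (b : ℤ) - 2) :
    PG k ((a : ℚ) • ω₁G + (b : ℚ) • ω₂G - ω₁G) =
      PG k (sG 1 ((a : ℚ) • ω₁G + (b : ℚ) • ω₂G + ρG) - ρG - ω₁G) := by
  have hk' : (k : ℚ) ≤ a + b - 2 := by exact_mod_cast hk
  have hν : (a : ℚ) • ω₁G + (b : ℚ) • ω₂G - ω₁G = ![2 * (a : ℚ) + 3 * b - 2, a + 2 * b - 1] := by
    funext i; fin_cases i <;> simp [ω₁G, ω₂G] <;> ring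
  have hν' : sG 1 ((a : ℚ) • ω₁G + (b : ℚ) • ω₂G + ρG) - ρG - ω₁G
      = ![2 * (a : ℚ) + 3 * b - 2, a + b - 2] := by
    funext i; fin_cases i <;> simp [sG, CG, ω₁G, ω₂G, ρG_eq, Fin.sum_univ_two,
      Matrix.vecHead, Matrix.vecTail] <;> ring
  rw [hν, hν', PG_eq_ncard_decompositions, PG_eq_ncard_decompositions]
  refine ncard_decompositions_eq_of_exchange (c := b + 1) (β := ![3, 2]) (γ := ![3, 1])
    (by simp [posG]) (by simp [posG]) ?_ (fun m ⟨hcard, hs, hsum⟩ => ?_)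
    (fun m ⟨hcard, hs, hsum⟩ => ?_)
  · funext i
    fin_cases i
    · simp
    · simp; ring
  · have hbound := posG_sum_one_le_card_add_count m hs
    rw [hsum, hcard] at hbound
    have hcount : (b + 1 : ℚ) ≤ Multiset.count ![3, 2] m := by norm_num at hbound; linarith
    exact_mod_cast hcount
  · have hbound := posG_sum_zero_sub_sum_one_le_card_add_count m hs
    rw [hsum, hcard] at hbound
    have hcount : (b + 1 : ℚ) ≤ Multiset.count ![3, 1] m := by norm_num at hbound; linarith
    exact_mod_cast hcount

theorem statement14 (a b : ℕ) (ha : 3 ≤ a) (hb : b ≤ 2) (k : ℕ)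
    (hk : (k : ℤ) ≤ (a : ℤ) + (b : ℤ) - 2) :
    PG k ((a : ℚ) • ω₁G + (b : ℚ) • ω₂G - ω₁G) =
      PG k (sG 1 ((a : ℚ) • ω₁G + (b : ℚ) • ω₂G + ρG) - ρG - ω₁G) :=
  statement14_general a b k hk

end
end

section
/- Let Φ be of type G₂ and P_k Kostant's partition function. For every λ = aω₁ + bω₂ with a ≥ 1 and 0 ≤ b ≤ 2, and every k ≤ a + b − 2, the alternating sum ∑_{u ∈ W} (−1)^{ℓ(u)} P_k(u·λ − ω₁) equals 0. -/
/-!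
The Weyl group of `G₂` acts on root coordinates by the integer matrices generated by `s₁, s₂`,
and `(-1)^ℓ(u) = det u`. Write `λ + ρ = (2a+3b+5, a+2b+3)`. For eight of the twelve elements the
`α₂`-coordinate of `u·λ - ω₁` is negative (this needs `b ≤ 2`), so `P_k` vanishes there. The
remaining terms `e, s₁, s₂, s₁s₂` cancel in pairs. A decomposition of `ν` into `k ≤ a + b - 2`
positive roots is forced, by comparing `c ⬝ᵥ ν` with `k` for a suitable linear form `c`, to
contain at least `b + 1` copies of a fixed root `r`; removing them is a bijection. For `e·λ - ω₁`
and `s₂·λ - ω₁` (with `r = 3α₁+2α₂` resp. `3α₁+α₂`) this leaves `(2a-5, a-3)`, and for `s₁·λ - ω₁`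
and `s₁s₂·λ - ω₁` (with `r = 3α₁+2α₂` resp. `α₂`) it leaves `(a-6, a-3)`.
-/

noncomputable section

/-- the composite of the simple reflections listed in `l` -/
def compG (l : List (Fin 2)) : VG → VG := (l.map sG).foldr (· ∘ ·) id

/-- the length of a Weyl group element: the minimal length of a word in the simple
reflections representing it -/
def lenG (u : VG → VG) : ℕ := sInf {m | ∃ l : List (Fin 2), l.length = m ∧ u = compG l}

open Matrix

def matG : Fin 2 → Matrix (Fin 2) (Fin 2) ℚ := ![!![-1, 3; 0, 1], !![1, 0; 1, -1]]

lemma sG_eq_mulVec (i : Fin 2) : sG i = (matG i).mulVec := by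
  fin_cases i <;> funext x j <;> fin_cases j <;>
    simp [sG, matG, CG, mulVec, dotProduct, Fin.sum_univ_two] <;> ring

lemma compG_eq_mulVec (l : List (Fin 2)) : compG l = ((l.map matG).prod).mulVec := by
  induction l with
  | nil => funext x; simp [compG]
  | cons i l ih =>
    change sG i ∘ compG l = _
    rw [ih, sG_eq_mulVec]
    funext x
    simp only [Function.comp_apply, List.map_cons, List.prod_cons, mulVec_mulVec]

lemma det_prod_matG (l : List (Fin 2)) : ((l.map matG).prod).det = (-1) ^ l.length := by
  induction l with
  | nil => simp
  | cons i l ih =>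
    rw [List.map_cons, List.prod_cons, det_mul, ih, List.length_cons, pow_succ']
    congr 1
    fin_cases i <;> simp [matG, det_fin_two_of]

lemma neg_one_pow_lenG_compG (l : List (Fin 2)) :
    (-1 : ℤ) ^ lenG (compG l) = (-1) ^ l.length := by
  obtain ⟨l₀, hlen, hl₀⟩ : lenG (compG l) ∈ {m | ∃ l', l'.length = m ∧ compG l = compG l'} :=
    Nat.sInf_mem
      (⟨l.length, l, rfl, rfl⟩ : ∃ n, n ∈ {m | ∃ l', l'.length = m ∧ compG l = compG l'})
  have hprod : (l₀.map matG).prod = (l.map matG).prod := by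
    rw [compG_eq_mulVec, compG_eq_mulVec] at hl₀
    exact (mulVec_injective hl₀).symm
  have hdet := congrArg det hprod
  rw [det_prod_matG, det_prod_matG, hlen] at hdet
  exact_mod_cast hdet

def weylMatrices : List (Matrix (Fin 2) (Fin 2) ℚ) :=
  [1, !![-1, 3; 0, 1], !![1, 0; 1, -1], !![2, -3; 1, -1], !![-1, 3; -1, 2], !![-2, 3; -1, 2],
   !![2, -3; 1, -2], !![1, -3; 1, -2], !![-2, 3; -1, 1], !![-1, 0; -1, 1], !![1, -3; 0, -1],
   !![-1, 0; 0, -1]]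

lemma matG_mul_mem_weylMatrices {A : Matrix (Fin 2) (Fin 2) ℚ} (hA : A ∈ weylMatrices)
    (i : Fin 2) : matG i * A ∈ weylMatrices := by
  simp only [weylMatrices, List.mem_cons, List.not_mem_nil, or_false] at hA
  fin_cases i <;> rcases hA with rfl|rfl|rfl|rfl|rfl|rfl|rfl|rfl|rfl|rfl|rfl|rfl <;>
    norm_num [matG, weylMatrices, mul_fin_two, ← one_fin_two]

lemma prod_matG_mem_weylMatrices (l : List (Fin 2)) : (l.map matG).prod ∈ weylMatrices := by
  induction l with
  | nil => simp [weylMatrices]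
  | cons i l ih => exact matG_mul_mem_weylMatrices ih i

lemma PG_eq_zero_of_apply_one_neg (k : ℕ) {ν : VG} (hν : ν 1 < 0) : PG k ν = 0 := by
  rw [PG, ← Set.ncard_empty (Multiset VG)]
  congr 1
  refine Set.eq_empty_of_forall_notMem fun m ⟨_, hm, hsum⟩ => hν.not_ge ?_
  rw [← hsum]
  change 0 ≤ Pi.evalAddMonoidHom (fun _ => ℚ) 1 m.sum
  rw [map_multiset_sum]
  refine Multiset.sum_nonneg fun y hy => ?_
  obtain ⟨x, hx, rfl⟩ := Multiset.mem_map.1 hy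
  have hx := hm x hx
  simp only [posG, Finset.mem_insert, Finset.mem_singleton] at hx
  rcases hx with rfl | rfl | rfl | rfl | rfl | rfl <;> norm_num

def ForcesRoot (k : ℕ) (ν : VG) (q : ℕ) (r : VG) : Prop :=
  ∀ m : Multiset VG, Multiset.card m = k → (∀ x ∈ m, x ∈ posG) → m.sum = ν → q ≤ m.count r

lemma dotProduct_sum_le {c r : VG} {t : ℚ} (hc : ∀ x ∈ posG, x ≠ r → c ⬝ᵥ x ≤ t)
    (hcr : c ⬝ᵥ r ≤ t + 1) (m : Multiset VG) (hm : ∀ x ∈ m, x ∈ posG) :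
    c ⬝ᵥ m.sum ≤ t * Multiset.card m + m.count r := by
  induction m using Multiset.induction_on with
  | empty => simp
  | cons x m ih =>
    have hx := hm x (Multiset.mem_cons_self x m)
    have ih := ih fun y hy => hm y (Multiset.mem_cons_of_mem hy)
    rw [Multiset.sum_cons, dotProduct_add, Multiset.card_cons, Multiset.count_cons]
    by_cases hxr : x = r
    · subst hxr; rw [if_pos rfl]; push_cast; linarith
    · rw [if_neg (Ne.symm hxr)]; push_cast; linarith [hc x hx hxr]

lemma forcesRoot_of_dotProduct {k q : ℕ} {ν c r : VG} {t : ℚ}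
    (hc : ∀ x ∈ posG, x ≠ r → c ⬝ᵥ x ≤ t) (hcr : c ⬝ᵥ r ≤ t + 1)
    (hν : q + t * k ≤ c ⬝ᵥ ν) : ForcesRoot k ν q r := by
  intro m hcard hm hsum
  have := dotProduct_sum_le hc hcr m hm
  rw [hsum, hcard] at this
  exact_mod_cast (by linarith : (q : ℚ) ≤ m.count r)

lemma PG_eq_ncard_of_forcesRoot {k q : ℕ} {ν r w : VG} (hr : r ∈ posG)
    (hforce : ForcesRoot k ν q r) (hw : w + q • r = ν) :
    PG k ν = {u : Multiset VG |
      Multiset.card u + q = k ∧ (∀ x ∈ u, x ∈ posG) ∧ u.sum = w}.ncard := by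
  have himage : {m : Multiset VG | Multiset.card m = k ∧ (∀ x ∈ m, x ∈ posG) ∧ m.sum = ν} =
      (· + Multiset.replicate q r) ''
        {u | Multiset.card u + q = k ∧ (∀ x ∈ u, x ∈ posG) ∧ u.sum = w} := by
    ext m
    constructor
    · rintro ⟨hcard, hm, hsum⟩
      obtain ⟨u, rfl⟩ := Multiset.le_iff_exists_add.1
        (Multiset.le_count_iff_replicate_le.1 (hforce m hcard hm hsum))
      refine ⟨u, ⟨?_, fun x hx => hm x (Multiset.mem_add.2 (.inr hx)), ?_⟩, add_comm _ _⟩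
      · simpa [add_comm] using hcard
      · rw [Multiset.sum_add, Multiset.sum_replicate, ← hw, add_comm] at hsum
        exact add_right_cancel hsum
    · rintro ⟨u, ⟨hcard, hu, rfl⟩, rfl⟩
      refine ⟨by simpa using hcard, fun x hx => ?_,
        by rw [Multiset.sum_add, Multiset.sum_replicate, hw]⟩
      rcases Multiset.mem_add.1 hx with hx | hx
      · exact hu x hx
      · exact Multiset.eq_of_mem_replicate hx ▸ hr
  rw [PG, himage, Set.ncard_image_of_injective _ (add_left_injective _)]

lemma PG_eq_of_forcesRoot {k q : ℕ} {ν ν' r r' w : VG} (hr : r ∈ posG) (hr' : r' ∈ posG)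
    (hforce : ForcesRoot k ν q r) (hforce' : ForcesRoot k ν' q r')
    (hw : w + q • r = ν) (hw' : w + q • r' = ν') : PG k ν = PG k ν' := by
  rw [PG_eq_ncard_of_forcesRoot hr hforce hw, PG_eq_ncard_of_forcesRoot hr' hforce' hw']

lemma mulVec_dot_sub_ω₁G (M : Matrix (Fin 2) (Fin 2) ℚ) (a b : ℚ) :
    M *ᵥ (a • ω₁G + b • ω₂G + ρG) - ρG - ω₁G =
      ![M 0 0 * (2 * a + 3 * b + 5) + M 0 1 * (a + 2 * b + 3) - 7,
        M 1 0 * (2 * a + 3 * b + 5) + M 1 1 * (a + 2 * b + 3) - 4] := by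
  have hρ : ρG = ![5, 3] := by
    norm_num [ρG, posG, Finset.sum_insert, funext_iff, Fin.forall_fin_two]
  ext i
  fin_cases i <;> simp [hρ, ω₁G, ω₂G, mulVec_fin_two] <;> ring

lemma PG_mulVec_dot_eq_zero (a b k : ℕ) (hb : b ≤ 2)
    {M : Matrix (Fin 2) (Fin 2) ℚ} (hM : M ∈ weylMatrices)
    (hM' : M ∉ [1, matG 0, matG 1, matG 0 * matG 1]) :
    PG k (M *ᵥ ((a : ℚ) • ω₁G + (b : ℚ) • ω₂G + ρG) - ρG - ω₁G) = 0 := by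
  have hb' : (b : ℚ) ≤ 2 := by exact_mod_cast hb
  simp only [weylMatrices, List.mem_cons, List.not_mem_nil, or_false] at hM
  rcases hM with rfl | rfl | rfl | rfl | hM
  · simp at hM'
  · simp [matG] at hM'
  · simp [matG] at hM'
  · norm_num [matG, mul_fin_two] at hM'
  apply PG_eq_zero_of_apply_one_neg
  rw [mulVec_dot_sub_ω₁G]
  rcases hM with rfl | rfl | rfl | rfl | rfl | rfl | rfl | rfl <;> simp <;>
    linarith [(a.cast_nonneg : (0 : ℚ) ≤ a), (b.cast_nonneg : (0 : ℚ) ≤ b)]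

lemma PG_dot_id_eq_PG_dot_s₂ (a b k : ℕ) (hk : (k : ℤ) ≤ (a : ℤ) + (b : ℤ) - 2) :
    PG k ((1 : Matrix (Fin 2) (Fin 2) ℚ) *ᵥ ((a : ℚ) • ω₁G + (b : ℚ) • ω₂G + ρG) - ρG - ω₁G) =
      PG k (matG 1 *ᵥ ((a : ℚ) • ω₁G + (b : ℚ) • ω₂G + ρG) - ρG - ω₁G) := by
  have hk' : (k : ℚ) ≤ a + b - 2 := by exact_mod_cast hk
  rw [mulVec_dot_sub_ω₁G, mulVec_dot_sub_ω₁G]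
  refine PG_eq_of_forcesRoot (q := b + 1) (r := ![3, 2]) (r' := ![3, 1])
    (w := ![2 * a - 5, a - 3]) (by simp [posG]) (by simp [posG]) ?_ ?_ ?_ ?_
  · refine forcesRoot_of_dotProduct (c := ![0, 1]) (t := 1) ?_ ?_ ?_ <;>
      norm_num [posG, dotProduct, Fin.sum_univ_two]
    linarith
  · refine forcesRoot_of_dotProduct (c := ![1, -1]) (t := 1) ?_ ?_ ?_ <;>
      norm_num [posG, dotProduct, Fin.sum_univ_two, matG]
    linarith
  all_goals norm_num [matG]; constructor <;> ring

lemma PG_dot_s₁_eq_PG_dot_s₁s₂ (a b k : ℕ) (hk : (k : ℤ) ≤ (a : ℤ) + (b : ℤ) - 2) :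
    PG k (matG 0 *ᵥ ((a : ℚ) • ω₁G + (b : ℚ) • ω₂G + ρG) - ρG - ω₁G) =
      PG k ((matG 0 * matG 1) *ᵥ ((a : ℚ) • ω₁G + (b : ℚ) • ω₂G + ρG) - ρG - ω₁G) := by
  have hk' : (k : ℚ) ≤ a + b - 2 := by exact_mod_cast hk
  rw [mulVec_dot_sub_ω₁G, mulVec_dot_sub_ω₁G]
  refine PG_eq_of_forcesRoot (q := b + 1) (r := ![3, 2]) (r' := ![0, 1])
    (w := ![a - 6, a - 3]) (by simp [posG]) (by simp [posG]) ?_ ?_ ?_ ?_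
  · refine forcesRoot_of_dotProduct (c := ![0, 1]) (t := 1) ?_ ?_ ?_ <;>
      norm_num [posG, dotProduct, Fin.sum_univ_two, matG]
    linarith
  · refine forcesRoot_of_dotProduct (c := ![-1, 1]) (t := 0) ?_ ?_ ?_ <;>
      norm_num [posG, dotProduct, Fin.sum_univ_two, matG, mul_fin_two]
    linarith
  all_goals norm_num [matG, mul_fin_two]; constructor <;> ring

theorem statement16_general (W : Finset (VG → VG))
    (hW : ∀ u, u ∈ W ↔ ∃ l : List (Fin 2), u = compG l)
    (a b : ℕ) (hb : b ≤ 2) (k : ℕ)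
    (hk : (k : ℤ) ≤ (a : ℤ) + (b : ℤ) - 2) :
    ∑ u ∈ W, (-1 : ℤ) ^ lenG u *
      (PG k (u ((a : ℚ) • ω₁G + (b : ℚ) • ω₂G + ρG) - ρG - ω₁G) : ℤ) = 0 := by
  classical
  set V : List (VG → VG) := [[], [0], [1], [0, 1]].map compG with hV
  have hV_mulVec : V = [1, matG 0, matG 1, matG 0 * matG 1].map mulVec := by
    simp [hV, compG_eq_mulVec]
  have hV_nodup : V.Nodup := by
    rw [hV_mulVec]
    refine List.Nodup.map mulVec_injective ?_
    norm_num [matG, mul_fin_two, ← Matrix.ext_iff, Fin.forall_fin_two]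
  have hV_sub : V.toFinset ⊆ W := by
    intro u hu
    obtain ⟨l, -, rfl⟩ := List.mem_map.1 (List.mem_toFinset.1 hu)
    exact (hW _).2 ⟨l, rfl⟩
  rw [← Finset.sum_subset hV_sub, List.sum_toFinset _ hV_nodup]
  · simp only [hV, List.map_cons, List.map_nil, List.sum_cons, List.sum_nil,
      neg_one_pow_lenG_compG]
    simp only [compG_eq_mulVec, List.map_cons, List.map_nil, List.prod_cons, List.prod_nil,
      mul_one]
    rw [PG_dot_id_eq_PG_dot_s₂ a b k hk, PG_dot_s₁_eq_PG_dot_s₁s₂ a b k hk]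
    norm_num
  · intro u hu huV
    obtain ⟨l, rfl⟩ := (hW u).1 hu
    rw [List.mem_toFinset, hV_mulVec, compG_eq_mulVec,
      List.mem_map_of_injective mulVec_injective] at huV
    rw [compG_eq_mulVec, PG_mulVec_dot_eq_zero a b k hb (prod_matG_mem_weylMatrices l) huV,
      Nat.cast_zero, mul_zero]

theorem statement16 (W : Finset (VG → VG))
    (hW : ∀ u, u ∈ W ↔ ∃ l : List (Fin 2), u = compG l)
    (a b : ℕ) (ha : 1 ≤ a) (hb : b ≤ 2) (k : ℕ)
    (hk : (k : ℤ) ≤ (a : ℤ) + (b : ℤ) - 2) :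
    ∑ u ∈ W, (-1 : ℤ) ^ lenG u *
      (PG k (u ((a : ℚ) • ω₁G + (b : ℚ) • ω₂G + ρG) - ρG - ω₁G) : ℤ) = 0 :=
  statement16_general W hW a b hb k hk

end
end

section
/- For an integer c ≥ 0, let P_c(n) denote the number of ways to write n as an ordered-irrelevant sum n = n₁ + ⋯ + n_c with each n_i ∈ {0,1,2,3} (i.e., the number of multisets of size c from {0,1,2,3} with sum n). Then P_c(2c) − P_c(c − 2) = ⌈(c+1)/3⌉, where P_c(c−2) is interpreted as 0 when c < 2. -/
/-! Reflection `x ↦ 3 - x` matches the multisets of sum `c - 2` with those of sum `2c + 2`, each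
of which contains a `3` because its sum exceeds `2c`. Trading one `3` for a `1` matches these with
the multisets of sum `2c` containing a `1`. What remains are the multisets of sum `2c` avoiding
`1`: their multiplicities satisfy `#3 = 2·#0` and `#2 = c - 3·#0`, so they are determined by
`#0 ∈ [0, c/3]`. -/

/-- `Pbox c n` is the number of multisets of size `c` with entries in `{0, 1, 2, 3}`
whose sum is `n` (so `Pbox c n = 0` for negative `n`). -/
noncomputable def Pbox (c : ℕ) (n : ℤ) : ℕ :=
  Set.ncard {m : Multiset ℕ | Multiset.card m = c ∧ (∀ x ∈ m, x ≤ 3) ∧ (m.sum : ℤ) = n}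

open Multiset

def boundedMultisets (k c : ℕ) (n : ℤ) : Set (Multiset ℕ) :=
  {m | card m = c ∧ (∀ x ∈ m, x ≤ k) ∧ (m.sum : ℤ) = n}

theorem Pbox_eq_ncard (c : ℕ) (n : ℤ) : Pbox c n = (boundedMultisets 3 c n).ncard := rfl

section

variable {k c : ℕ}

theorem finite_boundedMultisets (n : ℤ) : (boundedMultisets k c n).Finite := by
  refine (Set.finite_Iic (c • range (k + 1))).subset fun m ⟨hcard, hle, _⟩ => ?_
  refine le_iff_count.2 fun a => ?_
  by_cases ha : a ∈ m
  · rw [count_nsmul, count_eq_one_of_mem (nodup_range _)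
      (mem_range.2 (Nat.lt_succ_of_le (hle a ha))), mul_one, ← hcard]
    exact count_le_card a m
  · simp [count_eq_zero_of_notMem ha]

theorem map_tsub_map_tsub {m : Multiset ℕ} (h : ∀ x ∈ m, x ≤ k) :
    (m.map (k - ·)).map (k - ·) = m := by
  rw [map_map]
  conv_rhs => rw [← map_id m]
  exact map_congr rfl fun x hx => Nat.sub_sub_self (h x hx)

theorem cast_sum_map_tsub {m : Multiset ℕ} (h : ∀ x ∈ m, x ≤ k) :
    ((m.map (k - ·)).sum : ℤ) = k * card m - m.sum := by
  induction m using Multiset.induction_on with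
  | empty => simp
  | cons a s ih =>
    have ha := h a (mem_cons_self a s)
    simp only [map_cons, sum_cons, card_cons, Nat.cast_add, Nat.cast_sub ha,
      ih fun x hx => h x (mem_cons_of_mem hx)]
    ring

theorem ncard_boundedMultisets_sub (n : ℤ) :
    (boundedMultisets k c (k * c - n)).ncard = (boundedMultisets k c n).ncard := by
  have hmaps : ∀ n', Set.MapsTo (map (k - ·)) (boundedMultisets k c n')
      (boundedMultisets k c (k * c - n')) := by
    rintro n' m ⟨hcard, hle, hsum⟩
    refine ⟨by rw [card_map, hcard], fun x hx => ?_, ?_⟩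
    · obtain ⟨y, -, rfl⟩ := mem_map.1 hx
      exact Nat.sub_le k y
    · rw [cast_sum_map_tsub hle, hcard, hsum]
  have hinv : Set.InvOn (map (k - ·)) (map (k - ·)) (boundedMultisets k c (k * c - n))
      (boundedMultisets k c n) :=
    ⟨fun m hm => map_tsub_map_tsub hm.2.1, fun m hm => map_tsub_map_tsub hm.2.1⟩
  exact (hinv.bijOn (by simpa using hmaps (k * c - n)) (hmaps n)).ncard_eq

theorem ncard_boundedMultisets_inter_mem {a b : ℕ} (ha : a ≤ k) (hb : b ≤ k) (n : ℤ) :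
    (boundedMultisets k c n ∩ {m | a ∈ m}).ncard =
      (boundedMultisets k c (n + b - a) ∩ {m | b ∈ m}).ncard := by
  have hmaps : ∀ {a b : ℕ}, a ≤ k → b ≤ k → ∀ n : ℤ, Set.MapsTo (fun m => b ::ₘ m.erase a)
      (boundedMultisets k c n ∩ {m | a ∈ m}) (boundedMultisets k c (n + b - a) ∩ {m | b ∈ m}) := by
    rintro a b ha hb n m ⟨⟨hcard, hle, hsum⟩, hm⟩
    refine ⟨⟨?_, fun x hx => ?_, ?_⟩, mem_cons_self b _⟩
    · rw [card_cons, card_erase_add_one hm, hcard]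
    · rcases mem_cons.1 hx with rfl | hx
      exacts [hb, hle x (mem_of_mem_erase hx)]
    · rw [← sum_erase hm] at hsum
      push_cast [sum_cons] at hsum ⊢
      linarith
  have hinv : Set.InvOn (fun m => a ::ₘ m.erase b) (fun m => b ::ₘ m.erase a)
      (boundedMultisets k c n ∩ {m | a ∈ m}) (boundedMultisets k c (n + b - a) ∩ {m | b ∈ m}) :=
    ⟨fun m hm => by simp [cons_erase hm.2], fun m hm => by simp [cons_erase hm.2]⟩
  exact (hinv.bijOn (hmaps ha hb n) (by simpa using hmaps hb ha (n + b - a))).ncard_eq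

theorem mem_of_mul_card_lt_sum {m : Multiset ℕ} (h : ∀ x ∈ m, x ≤ k + 1)
    (hsum : k * card m < m.sum) : k + 1 ∈ m := by
  by_contra hk
  have hle : ∀ x ∈ m, x ≤ k := fun x hx =>
    Nat.le_of_lt_succ ((h x hx).lt_of_ne (by rintro rfl; exact hk hx))
  have := sum_le_card_nsmul m k hle
  rw [smul_eq_mul, mul_comm] at this
  omega

end

theorem eq_replicate_of_mem_boundedMultisets_sdiff {c : ℕ} {m : Multiset ℕ}
    (hm : m ∈ boundedMultisets 3 c (2 * c) \ {m | 1 ∈ m}) :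
    3 * count 0 m ≤ c ∧ m = replicate (count 0 m) 0 + replicate (c - 3 * count 0 m) 2 +
      replicate (2 * count 0 m) 3 := by
  obtain ⟨⟨hcard, hle, hsum⟩, h1⟩ := hm
  have hsub : ∀ a ∈ m, a ∈ ({0, 2, 3} : Finset ℕ) := fun a ha => by
    have : a ≠ 1 := by rintro rfl; exact h1 ha
    have := hle a ha
    simp only [Finset.mem_insert, Finset.mem_singleton]
    omega
  have hc := sum_count_eq_card hsub
  have hs := Finset.sum_multiset_count_of_subset m _ fun a ha => hsub a (mem_toFinset.1 ha)
  simp only [Finset.mem_insert, Finset.mem_singleton, OfNat.zero_ne_ofNat, Nat.reduceEqDiff,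
    or_self, not_false_eq_true, Finset.sum_insert, Finset.sum_singleton, smul_eq_mul, mul_zero,
    zero_add] at hc hs
  refine ⟨by omega, ext.2 fun a => ?_⟩
  by_cases ha : a ∈ ({0, 2, 3} : Finset ℕ)
  · simp only [Finset.mem_insert, Finset.mem_singleton] at ha
    rcases ha with rfl | rfl | rfl <;>
      simp only [count_add, count_replicate, OfNat.zero_ne_ofNat, OfNat.ofNat_ne_zero,
        Nat.reduceEqDiff, ↓reduceIte, add_zero, zero_add] <;> omega
  · rw [count_eq_zero_of_notMem fun h => ha (hsub a h)]
    simp only [Finset.mem_insert, Finset.mem_singleton, not_or] at ha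
    simp [count_replicate, Ne.symm ha.1, Ne.symm ha.2.1, Ne.symm ha.2.2]

theorem ncard_boundedMultisets_sdiff_mem_one (c : ℕ) :
    (boundedMultisets 3 c (2 * c) \ {m | 1 ∈ m}).ncard = c / 3 + 1 := by
  set w : ℕ → Multiset ℕ := fun j => replicate j 0 + replicate (c - 3 * j) 2 + replicate (2 * j) 3
  suffices Set.BijOn (count 0) (boundedMultisets 3 c (2 * c) \ {m | 1 ∈ m})
      (Finset.range (c / 3 + 1) : Set ℕ) by
    rw [this.ncard_eq, Set.ncard_coe_finset, Finset.card_range]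
  refine Set.InvOn.bijOn (f' := w) ⟨fun m hm => ?_, fun j _ => ?_⟩ (fun m hm => ?_) fun j hj => ?_
  · exact (eq_replicate_of_mem_boundedMultisets_sdiff hm).2.symm
  · simp [w, count_replicate]
  · have := (eq_replicate_of_mem_boundedMultisets_sdiff hm).1
    simp only [Finset.coe_range, Set.mem_Iio]
    omega
  · simp only [Finset.coe_range, Set.mem_Iio] at hj
    refine ⟨⟨?_, ?_, ?_⟩, ?_⟩
    · simp only [w, card_add, card_replicate]
      omega
    · simp only [w, mem_add, mem_replicate]
      omega
    · simp only [w, sum_add, sum_replicate, smul_eq_mul]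
      push_cast
      omega
    · simp [w, mem_replicate]

theorem Int.ceil_natCast_add_one_div (c d : ℕ) (hd : 0 < d) :
    ⌈((c : ℚ) + 1) / d⌉ = ((c / d : ℕ) : ℤ) + 1 := by
  have hd' : (0 : ℚ) < d := by exact_mod_cast hd
  have hdiv : ((c / d : ℕ) : ℚ) * d + (c % d : ℕ) = c := by exact_mod_cast Nat.div_add_mod' c d
  have hmod : ((c % d : ℕ) : ℚ) + 1 ≤ d := by exact_mod_cast Nat.mod_lt c hd
  rw [Int.ceil_eq_iff]
  simp only [Int.cast_add, Int.cast_natCast, Int.cast_one]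
  constructor
  · rw [add_sub_cancel_right, lt_div_iff₀ hd']
    linarith
  · rw [div_le_iff₀ hd']
    linarith

/-- `P_c(2c) - P_c(c - 2) = ⌈(c+1)/3⌉`, where `P_c(c-2)` is `0` when `c < 2`. -/
theorem statement18 (c : ℕ) :
    (Pbox c (2 * c) : ℤ) - (Pbox c ((c : ℤ) - 2) : ℤ) = ⌈((c : ℚ) + 1) / 3⌉ := by
  have hsplit := Set.ncard_inter_add_ncard_sdiff_eq_ncard (boundedMultisets 3 c (2 * c))
    {m | 1 ∈ m} (finite_boundedMultisets _)
  have hwithOne : (boundedMultisets 3 c (2 * c) ∩ {m | 1 ∈ m}).ncard = Pbox c (c - 2) := by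
    have hthree : boundedMultisets 3 c (3 * c - (c - 2)) ⊆ {m | 3 ∈ m} :=
      fun m ⟨hcard, hle, hsum⟩ => mem_of_mul_card_lt_sum hle (by omega)
    calc _ = (boundedMultisets 3 c (3 * c - (c - 2)) ∩ {m | 3 ∈ m}).ncard := by
          rw [ncard_boundedMultisets_inter_mem (by norm_num : 1 ≤ 3) le_rfl]
          ring_nf
      _ = (boundedMultisets 3 c (3 * c - (c - 2))).ncard := by
          rw [Set.inter_eq_left.2 hthree]
      _ = Pbox c (c - 2) := ncard_boundedMultisets_sub _
  have hceil := Int.ceil_natCast_add_one_div c 3 three_pos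
  rw [Nat.cast_ofNat] at hceil
  rw [Pbox_eq_ncard, ← hsplit, hwithOne, ncard_boundedMultisets_sdiff_mem_one, hceil]
  push_cast
  ring
end

section
/- For an integer c ≥ 0, the number of multisets (n₁,…,n_c) with n_i ∈ {0,1,2,3}, ∑ n_i = 2c, and at most one n_i equal to 2, is m + 1 where c = 3m + t with 0 ≤ t < 3 (i.e., equals ⌊c/3⌋ + 1). -/
/-!
Record a multiset with entries in `{0,1,2,3}` by the multiplicities `a, b, d, e` of `0, 1, 2, 3`.
The conditions read `a + b + d + e = c`, `b + 2d + 3e = 2c` and `d ≤ 1`. Subtracting the second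
equation from twice the first gives `e = 2a + b`, hence `3a + 2b + d = c`; since `d ≤ 1`, this
forces `b = (c - 3a) / 2` and `d = (c - 3a) % 2`. So the solutions are in bijection with the
values `0 ≤ a ≤ c / 3` of the number of zeros.
-/

open Multiset

namespace MultisetCount

def ofCounts (a b d e : ℕ) : Multiset ℕ :=
  replicate a 0 + replicate b 1 + replicate d 2 + replicate e 3

theorem count_ofCounts (a b d e x : ℕ) :
    count x (ofCounts a b d e) =
      (if x = 0 then a else 0) + (if x = 1 then b else 0) + (if x = 2 then d else 0) +
        (if x = 3 then e else 0) := by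
  simp only [ofCounts, count_add, count_replicate]
  split_ifs <;> omega

theorem count_two_ofCounts (a b d e : ℕ) : count 2 (ofCounts a b d e) = d := by
  simp [count_ofCounts]

theorem card_ofCounts (a b d e : ℕ) : card (ofCounts a b d e) = a + b + d + e := by
  simp only [ofCounts, card_add, card_replicate]

theorem sum_ofCounts (a b d e : ℕ) : (ofCounts a b d e).sum = b + 2 * d + 3 * e := by
  simp only [ofCounts, sum_add, sum_replicate, smul_eq_mul]
  ring

theorem le_three_of_mem_ofCounts {a b d e x : ℕ} (hx : x ∈ ofCounts a b d e) : x ≤ 3 := by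
  simp only [ofCounts, mem_add] at hx
  rcases hx with ((hx | hx) | hx) | hx <;> rw [eq_of_mem_replicate hx] <;> omega

theorem eq_ofCounts_count {m : Multiset ℕ} (hm : ∀ x ∈ m, x ≤ 3) :
    m = ofCounts (count 0 m) (count 1 m) (count 2 m) (count 3 m) := by
  ext x
  rw [count_ofCounts]
  match x with
  | 0 | 1 | 2 | 3 => simp
  | n + 4 => simpa using fun h => absurd (hm _ h) (by omega)

def admissible (c : ℕ) : Set (Multiset ℕ) :=
  {m | card m = c ∧ (∀ x ∈ m, x ≤ 3) ∧ m.sum = 2 * c ∧ count 2 m ≤ 1}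

theorem ofCounts_mem_admissible_iff {a b d e c : ℕ} :
    ofCounts a b d e ∈ admissible c ↔ a + b + d + e = c ∧ b + 2 * d + 3 * e = 2 * c ∧ d ≤ 1 := by
  simp only [admissible, Set.mem_ofPred_eq, card_ofCounts, sum_ofCounts, count_two_ofCounts]
  exact ⟨fun ⟨hcard, _, hsum, htwo⟩ => ⟨hcard, hsum, htwo⟩,
    fun ⟨hcard, hsum, htwo⟩ => ⟨hcard, fun _ => le_three_of_mem_ofCounts, hsum, htwo⟩⟩

def admissibleWithZeros (c k : ℕ) : Multiset ℕ :=
  ofCounts k ((c - 3 * k) / 2) ((c - 3 * k) % 2) ((c - 3 * k) / 2 + 2 * k)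

theorem admissibleWithZeros_injective (c : ℕ) : Function.Injective (admissibleWithZeros c) :=
  fun k l h => by
    simpa [admissibleWithZeros, count_ofCounts] using congrArg (count 0) h

theorem admissible_eq_image (c : ℕ) : admissible c = admissibleWithZeros c '' Set.Iic (c / 3) := by
  ext m
  constructor
  · intro hm
    have hm_eq := eq_ofCounts_count hm.2.1
    rw [hm_eq, ofCounts_mem_admissible_iff] at hm
    refine ⟨count 0 m, Set.mem_Iic.2 (by omega), ?_⟩
    conv_rhs => rw [hm_eq]
    rw [admissibleWithZeros]
    congr 1 <;> omega
  · rintro ⟨k, hk, rfl⟩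
    rw [Set.mem_Iic] at hk
    rw [admissibleWithZeros, ofCounts_mem_admissible_iff]
    omega

end MultisetCount

/-- The number of multisets `(n₁, …, n_c)` with `n_i ∈ {0,1,2,3}`, `∑ n_i = 2c` and at
most one `n_i` equal to `2` is `⌊c/3⌋ + 1`. -/
theorem statement19 (c : ℕ) :
    Set.ncard {m : Multiset ℕ | Multiset.card m = c ∧ (∀ x ∈ m, x ≤ 3) ∧
      m.sum = 2 * c ∧ m.count 2 ≤ 1} = c / 3 + 1 := by
  change (MultisetCount.admissible c).ncard = _
  rw [MultisetCount.admissible_eq_image,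
    Set.ncard_image_of_injective _ (MultisetCount.admissibleWithZeros_injective c),
    ← Finset.coe_Iic, Set.ncard_coe_finset, Nat.card_Iic]
end
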